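/- arXiv:2007.01181 — 8 statements merged into one kernel-verified Lean document; each statement's English description precedes it below -/
import Mathlib

section
/- Let f be the density of the truncated Laplace distribution with support [−s, s] and scale Δ/ε, where s = (Δ/ε)·ln(m(e^ε − 1)/δ + 1). Then the probability that a draw η from this distribution satisfies η < −s + Δ or η > s − Δ equals δ/m. -/
open MeasureTheory

open intervalIntegral in
private lemma my_integral_exp (a b : ℝ) :
    ∫ x in a..b, Real.exp x = Real.exp b - Real.exp a := integral_exp

/-- For the truncated Laplace density with support `[−s, s]` and scale `Δ/ε`,
where `s = (Δ/ε)·ln(m(e^ε − 1)/δ + 1)`, the probability that a draw `η` satisfies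
`η < −s + Δ` or `η > s − Δ` equals `δ/m`. -/
theorem truncLaplace_tail_prob
    (Δ ε δ : ℝ) (m : ℕ) (hΔ : 0 < Δ) (hε : 0 < ε) (hδ0 : 0 < δ) (hδ1 : δ < 1)
    (hm : 1 ≤ m)
    (s : ℝ) (hs : s = Δ / ε * Real.log ((m : ℝ) * (Real.exp ε - 1) / δ + 1))
    (hΔs : Δ ≤ s)
    (Z : ℝ) (hZ : Z = 2 * Δ * (1 - Real.exp (-ε * s / Δ)) / ε) :
    (∫ η in {η : ℝ | η < -s + Δ ∨ s - Δ < η},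
        (if |η| ≤ s then (1 / Z) * Real.exp (-|η| * ε / Δ) else 0)) = δ / m := by
  have hm1 : (1:ℝ) ≤ (m:ℝ) := by exact_mod_cast hm
  have hm0 : (0:ℝ) < (m:ℝ) := by linarith
  have hexpε : 1 < Real.exp ε := by
    rw [← Real.exp_zero]; exact Real.exp_lt_exp.2 hε
  set A : ℝ := (m : ℝ) * (Real.exp ε - 1) / δ + 1 with hA
  have hA1 : 1 < A := by
    have : 0 < (m : ℝ) * (Real.exp ε - 1) / δ :=
      div_pos (mul_pos hm0 (by linarith)) hδ0
    simp only [hA]; linarith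
  have hA0 : 0 < A := by linarith
  have hs0 : 0 < s := lt_of_lt_of_le hΔ hΔs
  set u : ℝ := Real.exp (-(ε / Δ) * s) with hudef
  have hu : u = 1 / A := by
    rw [hudef, hs]
    have h1 : -(ε / Δ) * (Δ / ε * Real.log A) = -Real.log A := by
      field_simp
    rw [h1, Real.exp_neg, Real.exp_log hA0, one_div]
  have hu1 : u < 1 := by
    rw [hudef, ← Real.exp_zero]
    apply Real.exp_lt_exp.2
    have : 0 < ε / Δ * s := by positivity
    linarith
  have hu0 : 0 < u := Real.exp_pos _
  have hZu : Z = 2 * Δ * (1 - u) / ε := by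
    rw [hZ, hudef]; ring_nf
  have hZ0 : 0 < Z := by
    rw [hZu]; have : 0 < 1 - u := by linarith
    positivity
  -- the functions
  set h : ℝ → ℝ := fun η => (1 / Z) * Real.exp (-|η| * ε / Δ) with hh
  set g : ℝ → ℝ := fun η => if |η| ≤ s then (1 / Z) * Real.exp (-|η| * ε / Δ) else 0
    with hg
  have hc : Continuous h := by
    apply continuous_const.mul
    exact ((continuous_abs.neg.mul continuous_const).div_const _).rexp
  set S : Set ℝ := Set.Iio (-s + Δ) ∪ Set.Ioi (s - Δ) with hSdef
  set T : Set ℝ := Set.Ico (-s) (-s + Δ) ∪ Set.Ioc (s - Δ) s with hTdef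
  have hSeq : {η : ℝ | η < -s + Δ ∨ s - Δ < η} = S := by
    ext x; simp [hSdef, Set.mem_Iio, Set.mem_Ioi]
  have hSm : MeasurableSet S := measurableSet_Iio.union measurableSet_Ioi
  have hTm : MeasurableSet T := measurableSet_Ico.union measurableSet_Ioc
  have hind : S.indicator g = T.indicator h := by
    funext η
    by_cases h1 : η ∈ T
    · have hmem : η ∈ S ∧ |η| ≤ s := by
        rcases h1 with ⟨h2, h3⟩ | ⟨h2, h3⟩
        · exact ⟨Or.inl h3, abs_le.2 ⟨h2, by linarith⟩⟩
        · exact ⟨Or.inr h2, abs_le.2 ⟨by linarith, h3⟩⟩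
      rw [Set.indicator_of_mem hmem.1, Set.indicator_of_mem h1]
      simp [hg, hh, hmem.2]
    · rw [Set.indicator_of_notMem h1]
      by_cases h2 : η ∈ S
      · rw [Set.indicator_of_mem h2, hg]
        have hns : ¬ |η| ≤ s := by
          intro hle
          rcases abs_le.1 hle with ⟨hl, hr⟩
          rcases h2 with h2 | h2
          · exact h1 (Or.inl ⟨hl, h2⟩)
          · exact h1 (Or.inr ⟨h2, hr⟩)
        simp [hg, hns]
      · rw [Set.indicator_of_notMem h2]
  have hi1 : IntegrableOn h (Set.Ico (-s) (-s + Δ)) := by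
    exact (hc.integrableOn_Icc).mono_set Set.Ico_subset_Icc_self
  have hi2 : IntegrableOn h (Set.Ioc (s - Δ) s) := hc.integrableOn_Ioc
  have hdisj : Disjoint (Set.Ico (-s) (-s + Δ)) (Set.Ioc (s - Δ) s) := by
    rw [Set.disjoint_left]
    rintro a ⟨ha1, ha2⟩ ⟨hb1, hb2⟩
    linarith
  have step1 : (∫ η in {η : ℝ | η < -s + Δ ∨ s - Δ < η}, g η)
      = (∫ η in Set.Ico (-s) (-s + Δ), h η) + (∫ η in Set.Ioc (s - Δ) s, h η) := by
    rw [hSeq, ← integral_indicator hSm, hind, integral_indicator hTm, hTdef,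
      setIntegral_union hdisj measurableSet_Ioc hi1 hi2]
  -- évaluation of the two pieces
  have hcne : ε / Δ ≠ 0 := by positivity
  have hΔne : Δ ≠ 0 := ne_of_gt hΔ
  have hεne : ε ≠ 0 := ne_of_gt hε
  have piece1 : (∫ η in Set.Ico (-s) (-s + Δ), h η)
      = (ε / Δ)⁻¹ * ((1 / Z) * (Real.exp (ε / Δ * (-s + Δ)) - Real.exp (ε / Δ * (-s)))) := by
    rw [integral_Ico_eq_integral_Ioo, ← integral_Ioc_eq_integral_Ioo,
      ← intervalIntegral.integral_of_le (by linarith)]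
    have hcong : ∀ x ∈ Set.uIcc (-s) (-s + Δ), h x = (1 / Z) * Real.exp (ε / Δ * x) := by
      intro x hx
      rw [Set.uIcc_of_le (by linarith)] at hx
      have hx2 : x ≤ 0 := le_trans hx.2 (by linarith)
      have : |x| = -x := abs_of_nonpos hx2
      rw [hh]
      simp only [this]
      congr 1
      ring
    rw [intervalIntegral.integral_congr hcong]
    have := intervalIntegral.integral_comp_mul_left
      (fun y => (1 / Z) * Real.exp y) (a := -s) (b := -s + Δ) hcne
    rw [this, smul_eq_mul, intervalIntegral.integral_const_mul,
      my_integral_exp]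
  have piece2 : (∫ η in Set.Ioc (s - Δ) s, h η)
      = (-(ε / Δ))⁻¹ * ((1 / Z) * (Real.exp (-(ε / Δ) * s) - Real.exp (-(ε / Δ) * (s - Δ)))) := by
    rw [← intervalIntegral.integral_of_le (by linarith)]
    have hcong : ∀ x ∈ Set.uIcc (s - Δ) s, h x = (1 / Z) * Real.exp (-(ε / Δ) * x) := by
      intro x hx
      rw [Set.uIcc_of_le (by linarith)] at hx
      have hx2 : 0 ≤ x := le_trans (by linarith) hx.1
      have : |x| = x := abs_of_nonneg hx2
      rw [hh]
      simp only [this]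
      congr 1
      ring
    rw [intervalIntegral.integral_congr hcong]
    have := intervalIntegral.integral_comp_mul_left
      (fun y => (1 / Z) * Real.exp y) (a := s - Δ) (b := s) (neg_ne_zero.2 hcne)
    rw [this, smul_eq_mul, intervalIntegral.integral_const_mul,
      my_integral_exp]
  -- rewrite exponentials in terms of u
  have he1 : Real.exp (ε / Δ * (-s + Δ)) = u * Real.exp ε := by
    rw [hudef, ← Real.exp_add]
    congr 1
    field_simp
  have he2 : Real.exp (ε / Δ * (-s)) = u := by
    rw [hudef]; congr 1; ring
  have he3 : Real.exp (-(ε / Δ) * (s - Δ)) = u * Real.exp ε := by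
    rw [hudef, ← Real.exp_add]
    congr 1
    field_simp
    ring
  have total : (∫ η in {η : ℝ | η < -s + Δ ∨ s - Δ < η}, g η)
      = 2 * (Δ / ε) * (1 / Z) * (u * Real.exp ε - u) := by
    rw [step1, piece1, piece2, he1, he2, he3, ← hudef]
    field_simp
    ring
  have hgoal : (∫ η in {η : ℝ | η < -s + Δ ∨ s - Δ < η},
      (if |η| ≤ s then (1 / Z) * Real.exp (-|η| * ε / Δ) else 0))
      = (∫ η in {η : ℝ | η < -s + Δ ∨ s - Δ < η}, g η) := rfl
  rw [hgoal, total, hZu, hu]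
  have hAm : A - 1 = (m : ℝ) * (Real.exp ε - 1) / δ := by rw [hA]; ring
  have h1u : (1 : ℝ) - 1 / A ≠ 0 := by
    rw [← hu]; intro hcon; apply absurd hu1; rw [show u = 1 by linarith]; simp
  have hAne : A ≠ 0 := ne_of_gt hA0
  have hδne : δ ≠ 0 := ne_of_gt hδ0
  have hmne : (m : ℝ) ≠ 0 := ne_of_gt hm0
  have hA1ne : A - 1 ≠ 0 := by intro hcon; linarith
  have hexpne : Real.exp ε - 1 ≠ 0 := by intro hcon; linarith
  have key : 2 * (Δ / ε) * (1 / (2 * Δ * (1 - 1 / A) / ε)) = A / (A - 1) := by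
    have h1A : 1 - 1 / A = (A - 1) / A := by field_simp
    rw [h1A]
    field_simp
  rw [key]
  have key2 : A / (A - 1) * (1 / A * Real.exp ε - 1 / A) = (Real.exp ε - 1) / (A - 1) := by
    field_simp
  rw [key2, hAm]
  rw [div_eq_div_iff (by positivity) (ne_of_gt hm0)]
  field_simp
end

section
/- Let D and D' be neighboring databases with ||b(D) − b(D')||₁ ≤ Δ, and let f_D and f_{D'} denote the densities of b(D) − s + η and b(D') − s + η respectively, where η has i.i.d. coordinates drawn from the truncated Laplace distribution with support [−s,s] and scale Δ/ε. Then for any vector u in the intersection of the supports [b(D)−2s, b(D)] ∩ [b(D')−2s, b(D')], f_D(u) ≤ e^ε · f_{D'}(u). -/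
/-- Claim 1: For neighboring databases with `‖b(D) − b(D')‖₁ ≤ Δ`, the
densities `f_D` and `f_{D'}` of `b(D) − s + η` and `b(D') − s + η` satisfy
`f_D(u) ≤ e^ε · f_{D'}(u)` for every `u` in the intersection of their supports. -/
theorem density_ratio_le_exp_eps
    {m : ℕ} (Δ ε s : ℝ) (hΔ : 0 < Δ) (hε : 0 < ε) (hs : 0 < s)
    (bD bD' : Fin m → ℝ)
    (hsens : ∑ i, |bD i - bD' i| ≤ Δ)
    (C : ℝ) (hC : 0 < C)
    (fD fD' : (Fin m → ℝ) → ℝ)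
    (hfD : ∀ u, fD u =
      if (∀ i, bD i - 2 * s ≤ u i ∧ u i ≤ bD i)
      then (1 / C) * ∏ i, Real.exp (-(ε * |u i + s - bD i|) / Δ) else 0)
    (hfD' : ∀ u, fD' u =
      if (∀ i, bD' i - 2 * s ≤ u i ∧ u i ≤ bD' i)
      then (1 / C) * ∏ i, Real.exp (-(ε * |u i + s - bD' i|) / Δ) else 0)
    (u : Fin m → ℝ)
    (huD : ∀ i, bD i - 2 * s ≤ u i ∧ u i ≤ bD i)
    (huD' : ∀ i, bD' i - 2 * s ≤ u i ∧ u i ≤ bD' i) :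
    fD u ≤ Real.exp ε * fD' u := by
  rw [hfD u, hfD' u, if_pos huD, if_pos huD']
  rw [← Real.exp_sum, ← Real.exp_sum, mul_comm (Real.exp ε), mul_assoc,
    ← Real.exp_add]
  apply mul_le_mul_of_nonneg_left _ (by positivity)
  apply Real.exp_le_exp.2
  rw [← sub_le_iff_le_add', ← Finset.sum_sub_distrib]
  have key : ∀ i : Fin m,
      -(ε * |u i + s - bD i|) / Δ - -(ε * |u i + s - bD' i|) / Δ
        ≤ ε / Δ * |bD i - bD' i| := by
    intro i
    have h1 : |u i + s - bD' i| - |u i + s - bD i| ≤ |bD i - bD' i| := by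
      have := abs_sub_abs_le_abs_sub (u i + s - bD' i) (u i + s - bD i)
      have h2 : (u i + s - bD' i) - (u i + s - bD i) = bD i - bD' i := by ring
      rw [h2] at this
      exact this
    have : ε * (|u i + s - bD' i| - |u i + s - bD i|) ≤ ε * |bD i - bD' i| :=
      mul_le_mul_of_nonneg_left h1 hε.le
    calc -(ε * |u i + s - bD i|) / Δ - -(ε * |u i + s - bD' i|) / Δ
        = ε * (|u i + s - bD' i| - |u i + s - bD i|) / Δ := by ring
      _ ≤ ε * |bD i - bD' i| / Δ := by
          exact div_le_div_of_nonneg_right this hΔ.le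
      _ = ε / Δ * |bD i - bD' i| := by ring
  calc ∑ i, (-(ε * |u i + s - bD i|) / Δ - -(ε * |u i + s - bD' i|) / Δ)
      ≤ ∑ i, ε / Δ * |bD i - bD' i| := Finset.sum_le_sum fun i _ => key i
    _ = ε / Δ * ∑ i, |bD i - bD' i| := by rw [Finset.mul_sum]
    _ ≤ ε / Δ * Δ := mul_le_mul_of_nonneg_left hsens (by positivity)
    _ = ε := by field_simp
end

section
/- With s = (Δ/ε)·ln(m(e^ε − 1)/δ + 1) and η ∈ ℝ^m having i.i.d. coordinates from the truncated Laplace distribution with support [−s,s] and scale Δ/ε, the probability that b(D) − s + η lies outside the box [b(D')−2s, b(D')] is at most δ, for any neighboring databases D, D' with ||b(D) − b(D')||_∞ ≤ Δ. -/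
/-!
Write `b = Δ/ε` for the scale. Each of the two tails of length `Δ` of the truncated Laplace law on
`[-s, s]` has mass `(e^ε - 1) / (2 (e^{s/b} - 1))`, which the choice of `s` makes `δ / (2m)`.
Coordinate `i` of `bD - s + η` leaves `[bD' - 2s, bD']` only if `η i ∉ [c - s, c + s]` with
`c = bD' i - bD i`, `|c| ≤ Δ`; up to the null set outside `[-s, s]` this puts `η i` in one of the
two tails. A union bound over the `m` coordinates gives `δ`.
-/

open MeasureTheory Real Set

theorem MeasureTheory.Measure.pi_setOf_exists_mem_le_sum {ι : Type*} [Fintype ι]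
    {α : ι → Type*} [∀ i, MeasurableSpace (α i)] (μ : ∀ i, Measure (α i))
    [∀ i, IsProbabilityMeasure (μ i)] (T : ∀ i, Set (α i)) :
    Measure.pi μ {x | ∃ i, x i ∈ T i} ≤ ∑ i, μ i (T i) := by
  classical
  have hcyl : ∀ i, Measure.pi μ (Function.eval i ⁻¹' T i) = μ i (T i) := fun i => by
    rw [← univ_pi_update_univ, Measure.pi_pi, Finset.prod_eq_single i (fun j _ hj => by simp [hj])
      (by simp)]
    simp
  calc Measure.pi μ {x | ∃ i, x i ∈ T i} = Measure.pi μ (⋃ i, Function.eval i ⁻¹' T i) := by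
        rw [ofPred_exists]; rfl
    _ ≤ ∑ i, Measure.pi μ (Function.eval i ⁻¹' T i) := measure_iUnion_fintype_le _ _
    _ = ∑ i, μ i (T i) := by simp_rw [hcyl]

noncomputable section

def truncLaplaceNormalizer (b s : ℝ) : ℝ := 2 * b * (1 - exp (-s / b))

def truncLaplacePDF (b s x : ℝ) : ℝ :=
  if |x| ≤ s then exp (-|x| / b) / truncLaplaceNormalizer b s else 0

def truncLaplace (b s : ℝ) : Measure ℝ :=
  volume.withDensity fun x => ENNReal.ofReal (truncLaplacePDF b s x)

end

section TruncLaplace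

variable {b s : ℝ}

lemma truncLaplaceNormalizer_nonneg (hb : 0 < b) (hs : 0 ≤ s) : 0 ≤ truncLaplaceNormalizer b s :=
  mul_nonneg (by positivity) (sub_nonneg.2 (exp_le_one_iff.2
    (div_nonpos_of_nonpos_of_nonneg (neg_nonpos.2 hs) hb.le)))

lemma truncLaplacePDF_nonneg (hb : 0 < b) (x : ℝ) : 0 ≤ truncLaplacePDF b s x := by
  unfold truncLaplacePDF
  split_ifs with hx
  · exact div_nonneg (exp_pos _).le (truncLaplaceNormalizer_nonneg hb ((abs_nonneg x).trans hx))
  · exact le_rfl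

lemma truncLaplacePDF_eq_indicator :
    truncLaplacePDF b s =
      (Icc (-s) s).indicator fun x => exp (-|x| / b) / truncLaplaceNormalizer b s := by
  funext x
  simp only [truncLaplacePDF, indicator, mem_Icc, ← abs_le]

lemma integrable_truncLaplacePDF : Integrable (truncLaplacePDF b s) := by
  rw [truncLaplacePDF_eq_indicator]
  exact (Continuous.integrableOn_Icc (by fun_prop)).integrable_indicator measurableSet_Icc

lemma intervalIntegral_truncLaplacePDF_of_nonneg (hb : b ≠ 0) {p q : ℝ} (hp : 0 ≤ p)
    (hpq : p ≤ q) (hq : q ≤ s) :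
    ∫ x in p..q, truncLaplacePDF b s x
      = b * (exp (-p / b) - exp (-q / b)) / truncLaplaceNormalizer b s := by
  have hpdf : EqOn (truncLaplacePDF b s) (fun x => exp (x / -b) / truncLaplaceNormalizer b s)
      (uIcc p q) := by
    intro x hx
    rw [uIcc_of_le hpq] at hx
    have hxs : |x| ≤ s := abs_le.2 ⟨by linarith [hx.1], by linarith [hx.2]⟩
    rw [truncLaplacePDF, if_pos hxs, abs_of_nonneg (hp.trans hx.1), neg_div, ← div_neg]
  rw [intervalIntegral.integral_congr hpdf, intervalIntegral.integral_div,
    intervalIntegral.integral_comp_div _ (neg_ne_zero.2 hb), integral_exp, smul_eq_mul,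
    div_neg, div_neg, neg_div, neg_div]
  ring

lemma intervalIntegral_truncLaplacePDF_of_nonpos (hb : b ≠ 0) {p q : ℝ} (hp : -s ≤ p)
    (hpq : p ≤ q) (hq : q ≤ 0) :
    ∫ x in p..q, truncLaplacePDF b s x
      = b * (exp (q / b) - exp (p / b)) / truncLaplaceNormalizer b s := by
  have hpdf : EqOn (truncLaplacePDF b s) (fun x => exp (x / b) / truncLaplaceNormalizer b s)
      (uIcc p q) := by
    intro x hx
    rw [uIcc_of_le hpq] at hx
    have hxs : |x| ≤ s := abs_le.2 ⟨by linarith [hx.1], by linarith [hx.2]⟩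
    rw [truncLaplacePDF, if_pos hxs, abs_of_nonpos (hx.2.trans hq), neg_neg]
  rw [intervalIntegral.integral_congr hpdf, intervalIntegral.integral_div,
    intervalIntegral.integral_comp_div _ hb, integral_exp, smul_eq_mul]

lemma truncLaplace_Icc (hb : 0 < b) {p q : ℝ} (hpq : p ≤ q) :
    truncLaplace b s (Icc p q) = ENNReal.ofReal (∫ x in p..q, truncLaplacePDF b s x) := by
  rw [truncLaplace, withDensity_apply _ measurableSet_Icc,
    ← ofReal_integral_eq_lintegral_ofReal integrable_truncLaplacePDF.integrableOn
      (ae_of_all _ (truncLaplacePDF_nonneg hb)),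
    integral_Icc_eq_integral_Ioc, intervalIntegral.integral_of_le hpq]

lemma truncLaplace_compl_Icc : truncLaplace b s (Icc (-s) s)ᶜ = 0 := by
  rw [truncLaplace, withDensity_apply _ measurableSet_Icc.compl]
  exact setLIntegral_eq_zero measurableSet_Icc.compl fun x hx => by
    rw [truncLaplacePDF_eq_indicator, indicator_of_notMem hx, ENNReal.ofReal_zero, Pi.zero_apply]

lemma truncLaplace_univ (hb : 0 < b) (hs : 0 < s) : truncLaplace b s univ = 1 := by
  have hu : 1 - exp (-s / b) ≠ 0 :=
    sub_ne_zero.2 (exp_lt_one_iff.2 (div_neg_of_neg_of_pos (neg_lt_zero.2 hs) hb)).ne'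
  rw [← measure_add_measure_compl measurableSet_Icc, truncLaplace_compl_Icc, add_zero,
    truncLaplace_Icc hb (by linarith),
    ← intervalIntegral.integral_add_adjacent_intervals (b := 0)
      integrable_truncLaplacePDF.intervalIntegrable integrable_truncLaplacePDF.intervalIntegrable,
    intervalIntegral_truncLaplacePDF_of_nonpos hb.ne' le_rfl (by linarith) le_rfl,
    intervalIntegral_truncLaplacePDF_of_nonneg hb.ne' le_rfl hs.le le_rfl]
  rw [← ENNReal.ofReal_one]
  congr 1
  unfold truncLaplaceNormalizer
  simp only [zero_div, neg_zero, exp_zero]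
  generalize exp (-s / b) = u at hu ⊢
  field_simp
  ring

lemma isProbabilityMeasure_truncLaplace (hb : 0 < b) (hs : 0 < s) :
    IsProbabilityMeasure (truncLaplace b s) :=
  ⟨truncLaplace_univ hb hs⟩

lemma mul_exp_sub_exp_div_truncLaplaceNormalizer (hb : b ≠ 0) (hs : s ≠ 0) (d : ℝ) :
    b * (exp ((d - s) / b) - exp (-s / b)) / truncLaplaceNormalizer b s
      = (exp (d / b) - 1) / (2 * (exp (s / b) - 1)) := by
  have hexp : exp (s / b) - 1 ≠ 0 :=
    sub_ne_zero.2 (mt (Real.exp_eq_one_iff _).1 (div_ne_zero hs hb))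
  rw [truncLaplaceNormalizer, sub_div, exp_sub, neg_div, exp_neg]
  field_simp

lemma truncLaplace_Icc_sub_self (hb : 0 < b) (hs : 0 < s) {d : ℝ} (hd : 0 ≤ d) (hds : d ≤ s) :
    truncLaplace b s (Icc (s - d) s)
      = ENNReal.ofReal ((exp (d / b) - 1) / (2 * (exp (s / b) - 1))) := by
  rw [truncLaplace_Icc hb (by linarith),
    intervalIntegral_truncLaplacePDF_of_nonneg hb.ne' (by linarith) (by linarith) le_rfl,
    neg_sub, mul_exp_sub_exp_div_truncLaplaceNormalizer hb.ne' hs.ne']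

lemma truncLaplace_Icc_neg_sub (hb : 0 < b) (hs : 0 < s) {d : ℝ} (hd : 0 ≤ d) (hds : d ≤ s) :
    truncLaplace b s (Icc (-s) (d - s))
      = ENNReal.ofReal ((exp (d / b) - 1) / (2 * (exp (s / b) - 1))) := by
  rw [truncLaplace_Icc hb (by linarith),
    intervalIntegral_truncLaplacePDF_of_nonpos hb.ne' le_rfl (by linarith) (by linarith),
    mul_exp_sub_exp_div_truncLaplaceNormalizer hb.ne' hs.ne']

lemma truncLaplace_compl_Icc_sub_add_le (hb : 0 < b) (hs : 0 < s) {c d : ℝ} (hc : |c| ≤ d)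
    (hds : d ≤ s) :
    truncLaplace b s (Icc (c - s) (c + s))ᶜ
      ≤ ENNReal.ofReal ((exp (d / b) - 1) / (exp (s / b) - 1)) := by
  have hd : 0 ≤ d := (abs_nonneg c).trans hc
  obtain ⟨hc₁, hc₂⟩ := abs_le.1 hc
  have hsub : (Icc (c - s) (c + s))ᶜ ⊆ (Icc (-s) (d - s) ∪ Icc (s - d) s) ∪ (Icc (-s) s)ᶜ := by
    intro x hx
    simp only [mem_compl_iff, mem_Icc, not_and_or, not_le, mem_union] at hx ⊢
    rcases lt_or_ge x (-s) with hxs | hxs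
    · exact Or.inr (Or.inl hxs)
    rcases lt_or_ge s x with hsx | hsx
    · exact Or.inr (Or.inr hsx)
    rcases hx with hx | hx
    · exact Or.inl (Or.inl ⟨hxs, by linarith⟩)
    · exact Or.inl (Or.inr ⟨by linarith, hsx⟩)
  have htail : 0 ≤ (exp (d / b) - 1) / (2 * (exp (s / b) - 1)) := by
    have := one_le_exp (div_nonneg hd hb.le)
    have := one_le_exp (div_nonneg hs.le hb.le)
    exact div_nonneg (by linarith) (by linarith)
  calc truncLaplace b s (Icc (c - s) (c + s))ᶜ
      ≤ truncLaplace b s (Icc (-s) (d - s)) + truncLaplace b s (Icc (s - d) s)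
          + truncLaplace b s (Icc (-s) s)ᶜ :=
        (measure_mono hsub).trans
          ((measure_union_le _ _).trans (add_le_add_left (measure_union_le _ _) _))
    _ = ENNReal.ofReal ((exp (d / b) - 1) / (exp (s / b) - 1)) := by
        rw [truncLaplace_Icc_neg_sub hb hs hd hds, truncLaplace_Icc_sub_self hb hs hd hds,
          truncLaplace_compl_Icc, add_zero, ← ENNReal.ofReal_add htail htail, mul_comm 2,
          ← div_div, add_halves]

end TruncLaplace

theorem prob_outside_box_le_delta_general
    (Δ ε δ : ℝ) (m : ℕ) (hΔ : 0 < Δ) (hε : 0 < ε) (hδ0 : 0 < δ)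
    (hm : 1 ≤ m)
    (s : ℝ) (hs : s = Δ / ε * Real.log ((m : ℝ) * (Real.exp ε - 1) / δ + 1))
    (hΔs : Δ ≤ s)
    (Z : ℝ) (hZ : Z = 2 * Δ * (1 - Real.exp (-ε * s / Δ)) / ε)
    (ν : Measure ℝ)
    (hν : ν = volume.withDensity
      (fun η => ENNReal.ofReal (if |η| ≤ s then (1 / Z) * Real.exp (-|η| * ε / Δ) else 0)))
    (bD bD' : Fin m → ℝ) (hsens : ∀ i, |bD i - bD' i| ≤ Δ) :
    Measure.pi (fun _ : Fin m => ν)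
      {η : Fin m → ℝ | ¬ ∀ i, bD' i - 2 * s ≤ bD i - s + η i ∧ bD i - s + η i ≤ bD' i}
      ≤ ENNReal.ofReal δ := by
  have hb : 0 < Δ / ε := div_pos hΔ hε
  have hs0 : 0 < s := hΔ.trans_le hΔs
  have hν' : ν = truncLaplace (Δ / ε) s := by
    rw [hν, truncLaplace]
    congr 1
    funext η
    simp only [truncLaplacePDF, truncLaplaceNormalizer, hZ]
    field_simp
  have : IsProbabilityMeasure ν := hν' ▸ isProbabilityMeasure_truncLaplace hb hs0
  have hexpε : 0 < exp ε - 1 := sub_pos.2 (one_lt_exp_iff.2 hε)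
  have hexp : exp (s / (Δ / ε)) - 1 = m * (exp ε - 1) / δ := by
    rw [hs, mul_div_cancel_left₀ _ hb.ne', exp_log (by positivity), add_sub_cancel_right]
  have hcoord : ∀ i, ν (Icc (bD' i - bD i - s) (bD' i - bD i + s))ᶜ ≤ ENNReal.ofReal (δ / m) := by
    intro i
    have h := truncLaplace_compl_Icc_sub_add_le hb hs0 (by rw [abs_sub_comm]; exact hsens i) hΔs
    rw [← hν', div_div_cancel₀ hΔ.ne', hexp] at h
    convert h using 2
    field_simp
  calc Measure.pi (fun _ : Fin m => ν)
        {η : Fin m → ℝ | ¬ ∀ i, bD' i - 2 * s ≤ bD i - s + η i ∧ bD i - s + η i ≤ bD' i}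
      ≤ Measure.pi (fun _ : Fin m => ν)
          {η | ∃ i, η i ∈ (Icc (bD' i - bD i - s) (bD' i - bD i + s))ᶜ} := by
        refine measure_mono fun η hη => ?_
        obtain ⟨i, hi⟩ := not_forall.1 hη
        exact ⟨i, fun hmem => hi ⟨by linarith [hmem.1], by linarith [hmem.2]⟩⟩
    _ ≤ ∑ i, ν (Icc (bD' i - bD i - s) (bD' i - bD i + s))ᶜ :=
        Measure.pi_setOf_exists_mem_le_sum _ _
    _ ≤ ∑ _i : Fin m, ENNReal.ofReal (δ / m) := Finset.sum_le_sum fun i _ => hcoord i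
    _ = ENNReal.ofReal δ := by
        rw [Finset.sum_const, Finset.card_univ, Fintype.card_fin, nsmul_eq_mul,
          ← ENNReal.ofReal_natCast, ← ENNReal.ofReal_mul (Nat.cast_nonneg m),
          mul_div_cancel₀ _ (Nat.cast_ne_zero.2 (Nat.one_le_iff_ne_zero.1 hm))]

/-- Claim 2: With `s = (Δ/ε)·ln(m(e^ε − 1)/δ + 1)` and `η` having i.i.d.
coordinates from the truncated Laplace distribution on `[−s,s]` with scale `Δ/ε`, the
probability that `b(D) − s + η` lies outside the box `[b(D')−2s, b(D')]` is at most `δ`,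
for neighboring databases with `‖b(D) − b(D')‖_∞ ≤ Δ`. -/
theorem prob_outside_box_le_delta
    (Δ ε δ : ℝ) (m : ℕ) (hΔ : 0 < Δ) (hε : 0 < ε) (hδ0 : 0 < δ) (hδ1 : δ < 1)
    (hm : 1 ≤ m)
    (s : ℝ) (hs : s = Δ / ε * Real.log ((m : ℝ) * (Real.exp ε - 1) / δ + 1))
    (hΔs : Δ ≤ s)
    (Z : ℝ) (hZ : Z = 2 * Δ * (1 - Real.exp (-ε * s / Δ)) / ε)
    (ν : Measure ℝ)
    (hν : ν = volume.withDensity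
      (fun η => ENNReal.ofReal (if |η| ≤ s then (1 / Z) * Real.exp (-|η| * ε / Δ) else 0)))
    (bD bD' : Fin m → ℝ) (hsens : ∀ i, |bD i - bD' i| ≤ Δ) :
    Measure.pi (fun _ : Fin m => ν)
      {η : Fin m → ℝ | ¬ ∀ i, bD' i - 2 * s ≤ bD i - s + η i ∧ bD i - s + η i ≤ bD' i}
      ≤ ENNReal.ofReal δ :=
  prob_outside_box_le_delta_general Δ ε δ m hΔ hε hδ0 hm s hs hΔs Z hZ ν hν bD bD' hsens
end

section
/- Suppose g : ℝⁿ → ℝ is L-Lipschitz in the ℓ_q-norm and there exists a constant α such that for every pair of constraint vectors b, b' ∈ ℝ^m with nonempty feasible sets, every point x feasible for b is at ℓ_q-distance at most α·||b − b'||_p from the feasible set of b' (a Hoffman-type bound). If the released constraint vector b̄ satisfies ||b(D) − b̄||_p ≤ (2Δ·m^{1/p}/ε)·ln(m(e^ε − 1)/δ + 1) with probability 1 and both feasible regions are nonempty, then with probability 1, max{g(x) : Ax ≤ b(D)} − max{g(x) : Ax ≤ b̄} ≤ (2LΔα·m^{1/p}/ε)·ln(m(e^ε − 1)/δ + 1).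 -/
open MeasureTheory

/-- Theorem: quality guarantee: Under an `α` Hoffman-type bound for the
linear system and an `L`-Lipschitz objective `g` (in the `ℓ_q`-norm), if the released
constraint vector `b̄` almost surely satisfies
`‖b(D) − b̄‖_p ≤ (2Δ·m^{1/p}/ε)·ln(m(e^ε − 1)/δ + 1)`, then almost surely
`max{g : Ax ≤ b(D)} − max{g : Ax ≤ b̄} ≤ (2LΔα·m^{1/p}/ε)·ln(m(e^ε − 1)/δ + 1)`. -/
theorem quality_guarantee
    {m n : ℕ} (A : Matrix (Fin m) (Fin n) ℝ)
    (g : (Fin n → ℝ) → ℝ) (L p q α Δ ε δ : ℝ)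
    (hL : 0 ≤ L) (hp : 1 ≤ p) (hq : 1 ≤ q) (hα : 0 ≤ α)
    (hΔ : 0 < Δ) (hε : 0 < ε) (hδ0 : 0 < δ) (hδ1 : δ < 1)
    (hLip : ∀ x y : Fin n → ℝ,
      |g x - g y| ≤ L * (∑ i, |x i - y i| ^ q) ^ (1 / q))
    (hHoffman : ∀ (b b' : Fin m → ℝ) (x : Fin n → ℝ),
      {z : Fin n → ℝ | ∀ i, A.mulVec z i ≤ b i}.Nonempty →
      {z : Fin n → ℝ | ∀ i, A.mulVec z i ≤ b' i}.Nonempty →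
      (∀ i, A.mulVec x i ≤ b i) →
      sInf {r : ℝ | ∃ xbar : Fin n → ℝ, (∀ i, A.mulVec xbar i ≤ b' i) ∧
          r = (∑ i, |x i - xbar i| ^ q) ^ (1 / q)}
        ≤ α * (∑ i, |b i - b' i| ^ p) ^ (1 / p))
    {Ω : Type*} [MeasurableSpace Ω] (P : Measure Ω) [IsProbabilityMeasure P]
    (bD : Fin m → ℝ) (bbar : Ω → Fin m → ℝ)
    (hclose : ∀ᵐ ω ∂P, (∑ i, |bD i - bbar ω i| ^ p) ^ (1 / p) ≤
      2 * Δ * (m : ℝ) ^ (1 / p) / ε * Real.log ((m : ℝ) * (Real.exp ε - 1) / δ + 1))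
    (xstar : Fin n → ℝ)
    (hxstar_feas : ∀ i, A.mulVec xstar i ≤ bD i)
    (hxstar_max : ∀ x : Fin n → ℝ, (∀ i, A.mulVec x i ≤ bD i) → g x ≤ g xstar)
    (xopt : Ω → Fin n → ℝ)
    (hxopt : ∀ᵐ ω ∂P, (∀ i, A.mulVec (xopt ω) i ≤ bbar ω i) ∧
      ∀ x : Fin n → ℝ, (∀ i, A.mulVec x i ≤ bbar ω i) → g x ≤ g (xopt ω)) :
    ∀ᵐ ω ∂P, g xstar - g (xopt ω) ≤
      2 * L * Δ * α * (m : ℝ) ^ (1 / p) / ε *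
        Real.log ((m : ℝ) * (Real.exp ε - 1) / δ + 1) := by
  filter_upwards [hclose, hxopt] with ω hc hx
  set C : ℝ := 2 * Δ * (m : ℝ) ^ (1 / p) / ε *
      Real.log ((m : ℝ) * (Real.exp ε - 1) / δ + 1) with hC
  set S : Set ℝ := {r : ℝ | ∃ xbar : Fin n → ℝ, (∀ i, A.mulVec xbar i ≤ bbar ω i) ∧
      r = (∑ i, |xstar i - xbar i| ^ q) ^ (1 / q)} with hS
  have hSne : S.Nonempty := ⟨_, xopt ω, hx.1, rfl⟩
  have hub : ∀ r ∈ S, g xstar - g (xopt ω) ≤ L * r := by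
    rintro r ⟨xbar, hfeas, rfl⟩
    calc g xstar - g (xopt ω) ≤ g xstar - g xbar := by
          have := hx.2 xbar hfeas; linarith
      _ ≤ |g xstar - g xbar| := le_abs_self _
      _ ≤ L * (∑ i, |xstar i - xbar i| ^ q) ^ (1 / q) := hLip _ _
  have hHof := hHoffman bD (bbar ω) xstar ⟨xstar, hxstar_feas⟩ ⟨xopt ω, hx.1⟩ hxstar_feas
  have key : g xstar - g (xopt ω) ≤ L * (α * C) := by
    rcases eq_or_lt_of_le hL with h0 | h0
    · obtain ⟨r, hr⟩ := hSne
      have := hub r hr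
      rw [← h0] at this ⊢
      simpa using this
    · have h1 : (g xstar - g (xopt ω)) / L ≤ sInf S :=
        le_csInf hSne (fun r hr => (div_le_iff₀' h0).mpr (hub r hr))
      have h2 : sInf S ≤ α * C := by
        refine hHof.trans ?_
        exact mul_le_mul_of_nonneg_left hc hα
      have := h1.trans h2
      calc g xstar - g (xopt ω) = L * ((g xstar - g (xopt ω)) / L) := by
            field_simp
        _ ≤ L * (α * C) := mul_le_mul_of_nonneg_left this h0.le
  calc g xstar - g (xopt ω) ≤ L * (α * C) := key
    _ = 2 * L * Δ * α * (m : ℝ) ^ (1 / p) / ε *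
        Real.log ((m : ℝ) * (Real.exp ε - 1) / δ + 1) := by rw [hC]; ring
end

section
/- Fix ε > 0 and δ ∈ (0, 1/2], and let t = (1/ε)·ln((e^ε − 1)/(2δ) + 1). Then t ≥ 1 and δ·∑_{j=0}^{⌊t⌋−1} e^{εj} ≤ 1/2. -/
/-- For `ε > 0` and `δ ∈ (0, 1/2]`, with
`t = (1/ε)·ln((e^ε − 1)/(2δ) + 1)`, we have `t ≥ 1` and
`δ·∑_{j=0}^{⌊t⌋−1} e^{εj} ≤ 1/2`. -/
theorem t_ge_one_and_geom_sum_le_half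
    (ε δ : ℝ) (hε : 0 < ε) (hδ0 : 0 < δ) (hδ : δ ≤ 1 / 2)
    (t : ℝ) (ht : t = 1 / ε * Real.log ((Real.exp ε - 1) / (2 * δ) + 1)) :
    1 ≤ t ∧ δ * ∑ j ∈ Finset.range ⌊t⌋₊, Real.exp (ε * j) ≤ 1 / 2 := by
  have he1 : (0:ℝ) < Real.exp ε - 1 := by
    nlinarith [Real.add_one_le_exp ε]
  have h2δ : 0 < 2 * δ := by linarith
  have hA : (0:ℝ) < (Real.exp ε - 1) / (2 * δ) + 1 := by positivity
  have hge : Real.exp ε ≤ (Real.exp ε - 1) / (2 * δ) + 1 := by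
    have h1 : Real.exp ε - 1 ≤ (Real.exp ε - 1) / (2 * δ) := by
      rw [le_div_iff₀ h2δ]
      nlinarith
    linarith
  have ht1 : 1 ≤ t := by
    rw [ht]
    have hlog : ε ≤ Real.log ((Real.exp ε - 1) / (2 * δ) + 1) := by
      have := Real.log_le_log (Real.exp_pos ε) (by linarith : Real.exp ε ≤ (Real.exp ε - 1) / (2 * δ) + 1)
      rwa [Real.log_exp] at this
    have : 1 * ε ≤ (1 / ε * Real.log ((Real.exp ε - 1) / (2 * δ) + 1)) * ε := by
      rw [one_mul]
      calc ε ≤ Real.log ((Real.exp ε - 1) / (2 * δ) + 1) := hlog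
        _ = 1 / ε * Real.log ((Real.exp ε - 1) / (2 * δ) + 1) * ε := by
            field_simp
    nlinarith [le_of_mul_le_mul_right this hε]
  refine ⟨ht1, ?_⟩
  have hexp_t : Real.exp (ε * t) = (Real.exp ε - 1) / (2 * δ) + 1 := by
    rw [ht]
    rw [show ε * (1 / ε * Real.log ((Real.exp ε - 1) / (2 * δ) + 1)) =
        Real.log ((Real.exp ε - 1) / (2 * δ) + 1) by field_simp]
    exact Real.exp_log hA
  have hsum : ∑ j ∈ Finset.range ⌊t⌋₊, Real.exp (ε * j)
      = (Real.exp ε ^ ⌊t⌋₊ - 1) / (Real.exp ε - 1) := by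
    rw [← geom_sum_eq (by nlinarith : Real.exp ε ≠ 1)]
    refine Finset.sum_congr rfl fun j _ => ?_
    rw [mul_comm, Real.exp_nat_mul]
  rw [hsum]
  have hfl : (⌊t⌋₊ : ℝ) ≤ t := Nat.floor_le (by linarith)
  have hpow : Real.exp ε ^ ⌊t⌋₊ ≤ (Real.exp ε - 1) / (2 * δ) + 1 := by
    rw [← Real.exp_nat_mul, ← hexp_t]
    exact Real.exp_le_exp.2 (by nlinarith)
  have hdiv : 2 * δ * ((Real.exp ε - 1) / (2 * δ)) = Real.exp ε - 1 := by
    field_simp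
  rw [mul_div_assoc', div_le_iff₀ he1]
  nlinarith [mul_le_mul_of_nonneg_left hpow hδ0.le]
end

section
/- Let μ be an (ε, δ)-DP mechanism mapping databases indexed by d ∈ ℤ^m to distributions over ℝ^m such that μ(D_d)_i ≤ Δ·d_i/a_i with probability 1 for each coordinate i, where databases D_d and D_{d'} are neighboring whenever ||d − d'||₁ ≤ 1. Then for every index i, every d ∈ ℤ^m, and every integer j ≥ 1, Pr[Δ(d_i − j)/a_i < μ(D_d)_i ≤ Δ·d_i/a_i] ≤ δ·∑_{ℓ=0}^{j−1} e^{εℓ}. -/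
open MeasureTheory

/-- Claim, induction: For an `(ε, δ)`-DP mechanism `μ` over databases
indexed by `d ∈ ℤ^m` (neighboring iff `‖d − d'‖₁ ≤ 1`) whose output satisfies
`μ(D_d)_i ≤ Δ d_i / a_i` with probability 1, for every coordinate `i`, every `d`, and
every integer `j ≥ 1`,
`Pr[Δ(d_i − j)/a_i < μ(D_d)_i ≤ Δ d_i/a_i] ≤ δ·∑_{ℓ=0}^{j−1} e^{εℓ}`. -/
theorem dp_interval_prob_bound
    {m : ℕ} (Δ ε δ : ℝ) (hΔ : 0 < Δ) (hε : 0 < ε) (hδ0 : 0 < δ)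
    (a : Fin m → ℝ) (ha : ∀ i, 0 < a i)
    (μ : (Fin m → ℤ) → Measure (Fin m → ℝ))
    (hprob : ∀ d, IsProbabilityMeasure (μ d))
    (hDP : ∀ d d' : Fin m → ℤ, (∑ i, |d i - d' i|) ≤ 1 →
      ∀ V : Set (Fin m → ℝ), MeasurableSet V →
        μ d V ≤ ENNReal.ofReal (Real.exp ε) * μ d' V + ENNReal.ofReal δ)
    (hsupp : ∀ d, μ d {x | ∀ i, x i ≤ Δ * (d i : ℝ) / a i} = 1) :
    ∀ (i : Fin m) (d : Fin m → ℤ) (j : ℕ), 1 ≤ j →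
      μ d {x | Δ * ((d i : ℝ) - j) / a i < x i ∧ x i ≤ Δ * (d i : ℝ) / a i} ≤
        ENNReal.ofReal (δ * ∑ ℓ ∈ Finset.range j, Real.exp (ε * ℓ)) := by
  intro i
  -- measurability of the events
  have hmeas : ∀ (A B : ℝ), MeasurableSet {x : Fin m → ℝ | A < x i ∧ x i ≤ B} := by
    intro A B
    have : {x : Fin m → ℝ | A < x i ∧ x i ≤ B} = (fun x => x i) ⁻¹' (Set.Ioc A B) := rfl
    rw [this]
    exact (measurable_pi_apply i) measurableSet_Ioc
  have key : ∀ (j : ℕ) (d : Fin m → ℤ),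
      μ d {x | Δ * ((d i : ℝ) - j) / a i < x i ∧ x i ≤ Δ * (d i : ℝ) / a i} ≤
        ENNReal.ofReal (δ * ∑ ℓ ∈ Finset.range j, Real.exp (ε * ℓ)) := by
    intro j
    induction j with
    | zero =>
      intro d
      have h0 : {x : Fin m → ℝ | Δ * ((d i : ℝ) - ((0:ℕ):ℝ)) / a i < x i ∧
          x i ≤ Δ * (d i : ℝ) / a i} = ∅ := by
        ext x
        simp only [Set.mem_setOf_eq, Set.mem_empty_iff_false, iff_false, not_and, not_le,
          Nat.cast_zero, sub_zero]
        intro h; linarith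
      rw [h0]
      simp
    | succ j ih =>
      intro d
      set d' : Fin m → ℤ := Function.update d i (d i - 1) with hd'
      have hd'i : d' i = d i - 1 := Function.update_self i (d i - 1) d
      have hnbr : (∑ k, |d k - d' k|) ≤ 1 := by
        have : ∀ k, |d k - d' k| = if k = i then 1 else 0 := by
          intro k
          by_cases hk : k = i
          · subst hk; simp [hd'i]
          · simp [hd', Function.update_of_ne hk, hk]
        rw [Finset.sum_congr rfl (fun k _ => this k)]
        simp
      set V : Set (Fin m → ℝ) :=
        {x | Δ * ((d i : ℝ) - (j+1:ℕ)) / a i < x i ∧ x i ≤ Δ * (d i : ℝ) / a i} with hV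
      set V' : Set (Fin m → ℝ) :=
        {x | Δ * ((d' i : ℝ) - (j:ℕ)) / a i < x i ∧ x i ≤ Δ * (d' i : ℝ) / a i} with hV'
      set S : Set (Fin m → ℝ) := {x | ∀ k, x k ≤ Δ * (d' k : ℝ) / a k} with hS
      have hSmeas : MeasurableSet S := by
        have : S = ⋂ k, (fun x : Fin m → ℝ => x k) ⁻¹' (Set.Iic (Δ * (d' k : ℝ) / a k)) := by
          ext x; simp [hS, Set.mem_iInter]
        rw [this]
        exact MeasurableSet.iInter fun k => (measurable_pi_apply k) measurableSet_Iic
      have hScompl : μ d' Sᶜ = 0 := by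
        have := hprob d'
        rw [measure_compl hSmeas (measure_ne_top _ _), hsupp d', measure_univ]
        simp
      have hsub : V ⊆ V' ∪ Sᶜ := by
        intro x hx
        by_cases hxS : x ∈ S
        · left
          rcases hx with ⟨h1, h2⟩
          have hxi : x i ≤ Δ * ((d' i : ℝ)) / a i := hxS i
          constructor
          · have : ((d' i : ℝ) - (j:ℕ)) = ((d i : ℝ) - (j+1:ℕ)) := by
              rw [hd'i]; push_cast; ring
            rw [this]; exact h1
          · exact hxi
        · right; exact hxS
      have hmuV' : μ d' V ≤ ENNReal.ofReal (δ * ∑ ℓ ∈ Finset.range j, Real.exp (ε * ℓ)) := by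
        calc μ d' V ≤ μ d' (V' ∪ Sᶜ) := measure_mono hsub
          _ ≤ μ d' V' + μ d' Sᶜ := measure_union_le _ _
          _ = μ d' V' := by rw [hScompl, add_zero]
          _ ≤ _ := ih d'
      have hstep := hDP d d' hnbr V (hmeas _ _)
      have hsum : δ * ∑ ℓ ∈ Finset.range (j+1), Real.exp (ε * ℓ) =
          Real.exp ε * (δ * ∑ ℓ ∈ Finset.range j, Real.exp (ε * ℓ)) + δ := by
        have he : ∀ ℓ : ℕ, Real.exp (ε * ((ℓ:ℝ) + 1)) = Real.exp ε * Real.exp (ε * ℓ) := by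
          intro ℓ; rw [mul_add, mul_one, Real.exp_add]; ring
        rw [Finset.sum_range_succ']
        push_cast
        rw [Finset.sum_congr rfl (fun ℓ _ => he ℓ), mul_zero, Real.exp_zero, ← Finset.mul_sum]
        ring
      calc μ d V ≤ ENNReal.ofReal (Real.exp ε) * μ d' V + ENNReal.ofReal δ := hstep
        _ ≤ ENNReal.ofReal (Real.exp ε) *
              ENNReal.ofReal (δ * ∑ ℓ ∈ Finset.range j, Real.exp (ε * ℓ)) +
              ENNReal.ofReal δ := by gcongr
        _ = ENNReal.ofReal (Real.exp ε * (δ * ∑ ℓ ∈ Finset.range j, Real.exp (ε * ℓ)) + δ) := by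
            rw [← ENNReal.ofReal_mul (Real.exp_nonneg ε), ← ENNReal.ofReal_add]
            · positivity
            · exact le_of_lt hδ0
        _ = ENNReal.ofReal (δ * ∑ ℓ ∈ Finset.range (j+1), Real.exp (ε * ℓ)) := by
            rw [hsum]
  intro d j _
  exact key j d
end

section
/- Let A ∈ ℝ^{m×m} be diagonal with positive diagonal entries a₁,…,a_m and g(x) = ⟨1, x⟩. For any Δ > 0, define b(D_d) = Δd for d ∈ ℤ^m, where D_d ∼ D_{d'} iff ||d − d'||₁ ≤ 1. Then for any ε > 0 and δ ∈ (0, 1/2], every (ε, δ)-DP mechanism μ satisfying A·μ(D_d) ≤ b(D_d) with probability 1 has expected suboptimality gap max{g(x) : Ax ≤ b(D_d)} − E[g(μ(D_d))] ≥ (Δ/(4ε))·(∑_{i=1}^m 1/a_i)·ln((e^ε − 1)/(2δ) + 1). -/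
/-!
Fix a coordinate `i`, let `L = log ((e^ε - 1) / (2δ) + 1)` and `K = ⌊L / ε⌋`. The database
`d - K eᵢ` is at `ℓ¹`-distance `K` from `d`, and its mechanism puts no mass on
`{aᵢ xᵢ > Δ (dᵢ - K)}`. Group privacy (the DP inequality iterated `K` times) bounds the
`μ d`-mass of that event by `δ (e^{Kε} - 1) / (e^ε - 1) ≤ 1/2`. Hence the nonnegative coordinate
gap `Δ dᵢ / aᵢ - xᵢ` is at least `KΔ / aᵢ` with probability at least `1/2`, and Markov's
inequality bounds its expectation below by `KΔ / (2aᵢ) ≥ LΔ / (4ε aᵢ)`; the last step uses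
`K ≥ L / (2ε)`, which holds because `δ ≤ 1/2` forces `L ≥ ε`. Summing over `i` gives the bound.
-/

open MeasureTheory Finset
open scoped ENNReal

theorem ENNReal.le_pow_mul_add_mul_geom_sum {u : ℕ → ℝ≥0∞} {c δ : ℝ≥0∞}
    (h : ∀ j, u j ≤ c * u (j + 1) + δ) (k : ℕ) :
    u 0 ≤ c ^ k * u k + δ * ∑ j ∈ range k, c ^ j := by
  induction k with
  | zero => simp
  | succ k ih =>
    calc u 0 ≤ c ^ k * (c * u (k + 1) + δ) + δ * ∑ j ∈ range k, c ^ j := by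
          grw [ih, h k]
      _ = c ^ (k + 1) * u (k + 1) + δ * ∑ j ∈ range (k + 1), c ^ j := by
          rw [sum_range_succ]; ring

def DifferentiallyPrivate {ι α : Type*} [Fintype ι] [MeasurableSpace α] (ε δ : ℝ)
    (μ : (ι → ℤ) → Measure α) : Prop :=
  ∀ d d' : ι → ℤ, ∑ i, |d i - d' i| ≤ 1 → ∀ V : Set α, MeasurableSet V →
    μ d V ≤ ENNReal.ofReal (Real.exp ε) * μ d' V + ENNReal.ofReal δ

namespace DifferentiallyPrivate

variable {ι α : Type*} [Fintype ι] [DecidableEq ι] [MeasurableSpace α] {ε δ : ℝ}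
  {μ : (ι → ℤ) → Measure α}

lemma measure_le_pow_mul_shift_add (hμ : DifferentiallyPrivate ε δ μ) (d : ι → ℤ) (i : ι)
    (k : ℕ) {V : Set α} (hV : MeasurableSet V) :
    μ d V ≤ ENNReal.ofReal (Real.exp ε) ^ k * μ (d - Pi.single i (k : ℤ)) V
      + ENNReal.ofReal δ * ∑ j ∈ range k, ENNReal.ofReal (Real.exp ε) ^ j := by
  have hstep (j : ℕ) : ∑ l, |(d - Pi.single i (j : ℤ) : ι → ℤ) l
      - (d - Pi.single i ((j + 1 : ℕ) : ℤ) : ι → ℤ) l| ≤ 1 := by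
    simp only [sub_sub_sub_cancel_left, ← Pi.sub_apply, ← Pi.single_sub]
    simp [Pi.single_apply, apply_ite]
  have := ENNReal.le_pow_mul_add_mul_geom_sum
    (u := fun j : ℕ => μ (d - Pi.single i (j : ℤ)) V) (fun j => hμ _ _ (hstep j) V hV) k
  rwa [Nat.cast_zero, Pi.single_zero, sub_zero] at this

lemma measure_le_of_shift_null (hμ : DifferentiallyPrivate ε δ μ) (hδ : 0 ≤ δ) (d : ι → ℤ)
    (i : ι) (k : ℕ) {V : Set α} (hV : MeasurableSet V) (h0 : μ (d - Pi.single i (k : ℤ)) V = 0) :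
    μ d V ≤ ENNReal.ofReal (δ * ∑ j ∈ range k, Real.exp ε ^ j) := by
  simpa [h0, ENNReal.ofReal_mul hδ, ENNReal.ofReal_sum_of_nonneg, ENNReal.ofReal_pow,
    Real.exp_nonneg] using hμ.measure_le_pow_mul_shift_add d i k hV

end DifferentiallyPrivate

lemma Real.mul_geom_sum_exp_le_half {ε δ : ℝ} (hε : 0 < ε) (hδ : 0 < δ) {k : ℕ}
    (hk : k * ε ≤ Real.log ((Real.exp ε - 1) / (2 * δ) + 1)) :
    δ * ∑ j ∈ range k, Real.exp ε ^ j ≤ 1 / 2 := by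
  have hexp : 1 < Real.exp ε := Real.one_lt_exp_iff.2 hε
  have hR : Real.exp ε ^ k - 1 ≤ (Real.exp ε - 1) / (2 * δ) := by
    rw [← Real.exp_nat_mul]
    linarith [(Real.le_log_iff_exp_le (by positivity)).1 hk]
  rw [geom_sum_eq hexp.ne', mul_div_assoc', div_le_iff₀ (by linarith)]
  have := (le_div_iff₀ (by positivity : 0 < 2 * δ)).1 hR
  linarith

lemma Real.le_log_exp_sub_one_div_add_one {ε δ : ℝ} (hε : 0 ≤ ε) (hδ0 : 0 < δ) (hδ : δ ≤ 1 / 2) :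
    ε ≤ Real.log ((Real.exp ε - 1) / (2 * δ) + 1) := by
  have hexp : 0 ≤ Real.exp ε - 1 := by linarith [Real.one_le_exp hε]
  rw [Real.le_log_iff_exp_le (by positivity)]
  linarith [le_div_self hexp (by positivity : 0 < 2 * δ) (by linarith)]

lemma div_two_le_integral_of_measure_lt_le_half {α : Type*} [MeasurableSpace α]
    {ν : Measure α} [IsProbabilityMeasure ν] {g : α → ℝ} (hg0 : 0 ≤ᵐ[ν] g) (hg : Integrable g ν)
    {c : ℝ} (hc : 0 ≤ c) (htail : ν {x | g x < c} ≤ ENNReal.ofReal (1 / 2)) :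
    c / 2 ≤ ∫ x, g x ∂ν := by
  have hlt : ν.real {x | g x < c} ≤ 1 / 2 := ENNReal.toReal_le_of_le_ofReal (by norm_num) htail
  have hge : 1 / 2 ≤ ν.real {x | c ≤ g x} := by
    have hcompl := measureReal_compl₀ (μ := ν) (s := {x | g x < c})
      (hg.aemeasurable.nullMeasurable measurableSet_Iio)
    simp only [Set.compl_ofPred, not_lt, probReal_univ] at hcompl
    linarith
  calc c / 2 = c * (1 / 2) := by ring
    _ ≤ c * ν.real {x | c ≤ g x} := by gcongr
    _ ≤ ∫ x, g x ∂ν := mul_meas_ge_le_integral_of_nonneg hg0 hg c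

lemma Integrable.of_sum_of_ae_nonneg {ι α : Type*} [Fintype ι] [MeasurableSpace α]
    {ν : Measure α} {f : ι → α → ℝ} (hf : ∀ i, AEStronglyMeasurable (f i) ν)
    (h0 : ∀ i, 0 ≤ᵐ[ν] f i)
    (hs : Integrable (fun x => ∑ i, f i x) ν) (i : ι) : Integrable (f i) ν := by
  refine hs.mono' (hf i) ?_
  filter_upwards [ae_all_iff.2 h0] with x hx
  rw [Real.norm_of_nonneg (hx i)]
  exact single_le_sum (fun j _ => hx j) (mem_univ i)

lemma sum_integral_sub_eq {ι α : Type*} [Fintype ι] [MeasurableSpace α] {ν : Measure α}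
    [IsProbabilityMeasure ν] (c : ι → ℝ) {f : ι → α → ℝ}
    (h : ∀ i, Integrable (fun x => c i - f i x) ν) (hf : Integrable (fun x => ∑ i, f i x) ν) :
    ∑ i, ∫ x, (c i - f i x) ∂ν = ∑ i, c i - ∫ x, (∑ i, f i x) ∂ν := by
  rw [← integral_finsetSum _ fun i _ => h i]
  simp_rw [sum_sub_distrib]
  rw [integral_sub (integrable_const _) hf, integral_const, probReal_univ, one_smul]

section LowerBound

variable {ι : Type*} [Fintype ι] {Δ ε δ : ℝ} {a : ι → ℝ}
  {μ : (ι → ℤ) → Measure (ι → ℝ)}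

lemma ae_coord_gap_nonneg (ha : ∀ i, 0 < a i) (hprob : ∀ d, IsProbabilityMeasure (μ d))
    (hsupp : ∀ d, μ d {x | ∀ i, a i * x i ≤ Δ * (d i : ℝ)} = 1) (d : ι → ℤ) :
    ∀ᵐ x ∂μ d, ∀ i, 0 ≤ Δ * ((d i : ℝ) / a i) - x i := by
  have hmeas : Measurable fun x : ι → ℝ => ∀ i, a i * x i ≤ Δ * (d i : ℝ) :=
    Measurable.forall fun i =>
      measurableSet_setOfPred.1 (measurableSet_le (by fun_prop) (by fun_prop))
  have := hprob d
  filter_upwards [(ae_iff_prob_eq_one hmeas).2 (hsupp d)] with x hx i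
  rw [sub_nonneg, mul_div_assoc', le_div_iff₀' (ha i)]
  exact hx i

lemma integrable_coord_gap (ha : ∀ i, 0 < a i) (hprob : ∀ d, IsProbabilityMeasure (μ d))
    (hsupp : ∀ d, μ d {x | ∀ i, a i * x i ≤ Δ * (d i : ℝ)} = 1)
    (hint : ∀ d, Integrable (fun x : ι → ℝ => ∑ i, x i) (μ d)) (d : ι → ℤ) (i : ι) :
    Integrable (fun x : ι → ℝ => Δ * ((d i : ℝ) / a i) - x i) (μ d) := by
  have := hprob d
  refine Integrable.of_sum_of_ae_nonneg
    (fun j => (by fun_prop : Measurable _).aestronglyMeasurable)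
    (fun j => (ae_coord_gap_nonneg ha hprob hsupp d).mono fun x hx => hx j) ?_ i
  simpa only [Pi.sub_def, sum_sub_distrib]
    using (integrable_const (∑ j, Δ * ((d j : ℝ) / a j))).sub (hint d)

lemma measure_coord_gap_lt_le [DecidableEq ι] (hμ : DifferentiallyPrivate ε δ μ) (hδ : 0 ≤ δ)
    (ha : ∀ i, 0 < a i) (hprob : ∀ d, IsProbabilityMeasure (μ d))
    (hsupp : ∀ d, μ d {x | ∀ i, a i * x i ≤ Δ * (d i : ℝ)} = 1) (d : ι → ℤ) (i : ι) (k : ℕ) :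
    μ d {x | Δ * ((d i : ℝ) / a i) - x i < k * Δ / a i}
      ≤ ENNReal.ofReal (δ * ∑ j ∈ range k, Real.exp ε ^ j) := by
  refine hμ.measure_le_of_shift_null hδ d i k (measurableSet_lt (by fun_prop) (by fun_prop)) ?_
  rw [measure_eq_zero_iff_ae_notMem]
  filter_upwards [ae_coord_gap_nonneg ha hprob hsupp (d - Pi.single i (k : ℤ))] with x hx
  have hshift : Δ * (((d i : ℝ) - k) / a i) = Δ * ((d i : ℝ) / a i) - k * Δ / a i := by ring
  have := hx i
  simp only [Pi.sub_apply, Pi.single_eq_same, Int.cast_sub, Int.cast_natCast] at this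
  simp only [not_lt]
  linarith

lemma integral_coord_gap_ge [DecidableEq ι] (hμ : DifferentiallyPrivate ε δ μ) (hδ : 0 ≤ δ)
    (hΔ : 0 ≤ Δ) (ha : ∀ i, 0 < a i) (hprob : ∀ d, IsProbabilityMeasure (μ d))
    (hsupp : ∀ d, μ d {x | ∀ i, a i * x i ≤ Δ * (d i : ℝ)} = 1)
    (hint : ∀ d, Integrable (fun x : ι → ℝ => ∑ i, x i) (μ d)) {k : ℕ}
    (hk : δ * ∑ j ∈ range k, Real.exp ε ^ j ≤ 1 / 2) (d : ι → ℤ) (i : ι) :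
    k * Δ / a i / 2 ≤ ∫ x, (Δ * ((d i : ℝ) / a i) - x i) ∂μ d := by
  have := hprob d
  refine div_two_le_integral_of_measure_lt_le_half
    ((ae_coord_gap_nonneg ha hprob hsupp d).mono fun x hx => hx i)
    (integrable_coord_gap ha hprob hsupp hint d i) (by have := ha i; positivity) ?_
  exact (measure_coord_gap_lt_le hμ hδ ha hprob hsupp d i k).trans (ENNReal.ofReal_le_ofReal hk)

end LowerBound

/-- Lower bound theorem: Let `A` be diagonal with positive entries
`a₁,…,a_m`, `g(x) = ⟨1, x⟩`, and `b(D_d) = Δd`. Every `(ε, δ)`-DP mechanism `μ`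
satisfying `A μ(D_d) ≤ b(D_d)` with probability 1 has expected suboptimality gap at
least `(Δ/(4ε))·(∑_i 1/a_i)·ln((e^ε − 1)/(2δ) + 1)`; here
`max{g(x) : Ax ≤ Δd} = Δ·∑_i d_i/a_i`. -/
theorem dp_lower_bound
    {m : ℕ} (Δ ε δ : ℝ) (hΔ : 0 < Δ) (hε : 0 < ε) (hδ0 : 0 < δ) (hδ : δ ≤ 1 / 2)
    (a : Fin m → ℝ) (ha : ∀ i, 0 < a i)
    (μ : (Fin m → ℤ) → Measure (Fin m → ℝ))
    (hprob : ∀ d, IsProbabilityMeasure (μ d))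
    (hDP : ∀ d d' : Fin m → ℤ, (∑ i, |d i - d' i|) ≤ 1 →
      ∀ V : Set (Fin m → ℝ), MeasurableSet V →
        μ d V ≤ ENNReal.ofReal (Real.exp ε) * μ d' V + ENNReal.ofReal δ)
    (hsupp : ∀ d, μ d {x | ∀ i, a i * x i ≤ Δ * (d i : ℝ)} = 1)
    (hint : ∀ d, Integrable (fun x : Fin m → ℝ => ∑ i, x i) (μ d)) :
    ∀ d : Fin m → ℤ,
      Δ * (∑ i, (d i : ℝ) / a i) - (∫ x, (∑ i, x i) ∂μ d) ≥
        Δ / (4 * ε) * (∑ i, 1 / a i) * Real.log ((Real.exp ε - 1) / (2 * δ) + 1) := by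
  intro d
  set L := Real.log ((Real.exp ε - 1) / (2 * δ) + 1)
  set K := ⌊L / ε⌋₊
  have hεL : ε ≤ L := Real.le_log_exp_sub_one_div_add_one hε.le hδ0 hδ
  have hKε : K * ε ≤ L := (le_div_iff₀ hε).1 (Nat.floor_le (div_nonneg (hε.le.trans hεL) hε.le))
  have hLK : L / ε / 2 ≤ K := (Nat.div_two_lt_floor ((one_le_div hε).2 hεL)).le
  have := hprob d
  calc Δ / (4 * ε) * (∑ i, 1 / a i) * L = ∑ i, L / ε / 2 * Δ / a i / 2 := by
        rw [mul_sum, sum_mul]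
        refine sum_congr rfl fun i _ => ?_
        field_simp
        ring
    _ ≤ ∑ i, K * Δ / a i / 2 := by gcongr with i; exact (ha i).le
    _ ≤ ∑ i, ∫ x, (Δ * ((d i : ℝ) / a i) - x i) ∂μ d :=
        sum_le_sum fun i _ => integral_coord_gap_ge hDP hδ0.le hΔ.le ha hprob hsupp hint
          (Real.mul_geom_sum_exp_le_half hε hδ0 hKε) d i
    _ = Δ * (∑ i, (d i : ℝ) / a i) - ∫ x, (∑ i, x i) ∂μ d := by
        rw [sum_integral_sub_eq _ (integrable_coord_gap ha hprob hsupp hint d) (hint d), mul_sum]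
end

section
/- If S* = ∩_D {x : Ax ≤ b(D)} is nonempty and the database space is connected under the neighboring relation, then any (ε, 0)-differentially private mechanism that satisfies the constraints Ax ≤ b(D) with probability 1 has, for every database D, output supported in S*; consequently its expected objective value E[g(μ(D))] is at most max_{x ∈ S*} g(x) when g is continuous and the max is attained. -/
/-!
The pure-DP inequality `μ D V ≤ exp ε · μ D' V` makes `μ D ≪ μ D'` for neighbours, so along
chains of neighbours every output distribution `μ D` is absolutely continuous with respect to
every other `μ D'`. Hence the topological support of `μ D` lies in the support of `μ D'`, and so
in the closed polyhedron `{x | A x ≤ b D'}` that carries `μ D'`. So the support of `μ D` lies in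
`S*`, and it is conull because `ℝⁿ` is second countable; the bound on the expected objective
follows.
-/

open MeasureTheory

section

variable {R m n : Type*} [Fintype n] [TopologicalSpace R] [NonUnitalNonAssocSemiring R]
  [ContinuousAdd R] [ContinuousMul R] [PartialOrder R] [OrderClosedTopology R]

theorem Matrix.isClosed_setOf_mulVec_le (A : Matrix m n R) (b : m → R) :
    IsClosed {x | A.mulVec x ≤ b} :=
  isClosed_le (continuous_const.matrix_mulVec continuous_id) continuous_const

end

namespace MeasureTheory

variable {𝒳 α : Type*} [MeasurableSpace α]

def IsPureDP (Neighbor : 𝒳 → 𝒳 → Prop) (μ : 𝒳 → Measure α) (ε : ℝ) : Prop :=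
  ∀ D D', Neighbor D D' → ∀ V : Set α, MeasurableSet V →
    μ D V ≤ ENNReal.ofReal (Real.exp ε) * μ D' V

theorem Measure.absolutelyContinuous_of_forall_le_mul {μ ν : Measure α} (c : ENNReal)
    (h : ∀ s, MeasurableSet s → μ s ≤ c * ν s) : μ ≪ ν :=
  Measure.absolutelyContinuous_of_le_smul (Measure.le_iff.2 h)

theorem IsPureDP.absolutelyContinuous {Neighbor : 𝒳 → 𝒳 → Prop} {μ : 𝒳 → Measure α} {ε : ℝ}
    (hDP : IsPureDP Neighbor μ ε) {D D' : 𝒳} (h : Relation.ReflTransGen Neighbor D D') :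
    μ D ≪ μ D' := by
  induction h with
  | refl => exact .rfl
  | tail _ hnb ih =>
    exact ih.trans (Measure.absolutelyContinuous_of_forall_le_mul _ (hDP _ _ hnb))

theorem Measure.ae_mem_iInter_of_absolutelyContinuous {ι : Type*} [TopologicalSpace α]
    [HereditarilyLindelofSpace α] {μ : Measure α} {ν : ι → Measure α} {s : ι → Set α}
    (hac : ∀ i, μ ≪ ν i) (hs : ∀ i, IsClosed (s i)) (hν : ∀ i, ∀ᵐ x ∂ν i, x ∈ s i) :
    ∀ᵐ x ∂μ, x ∈ ⋂ i, s i := by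
  have hsupp : μ.support ⊆ ⋂ i, s i := Set.subset_iInter fun i ↦
    (hac i).support_mono.trans (Measure.support_subset_of_isClosed (hs i) (hν i))
  exact Filter.mem_of_superset Measure.support_mem_ae hsupp

end MeasureTheory

theorem pure_dp_supported_in_intersection_general
    {𝒳 : Type*} {m n : ℕ} (Neighbor : 𝒳 → 𝒳 → Prop)
    (A : Matrix (Fin m) (Fin n) ℝ) (b : 𝒳 → Fin m → ℝ) (ε : ℝ)
    (hconn : ∀ D D' : 𝒳, Relation.ReflTransGen Neighbor D D')
    (μ : 𝒳 → Measure (Fin n → ℝ)) (hprob : ∀ D, IsProbabilityMeasure (μ D))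
    (hDP : ∀ D D', Neighbor D D' → ∀ V : Set (Fin n → ℝ), MeasurableSet V →
      μ D V ≤ ENNReal.ofReal (Real.exp ε) * μ D' V)
    (hsat : ∀ D, μ D {x | ∀ i, A.mulVec x i ≤ b D i} = 1)
    (g : (Fin n → ℝ) → ℝ)
    (xmax : Fin n → ℝ)
    (hxmax_max : ∀ x ∈ ⋂ D : 𝒳, {x : Fin n → ℝ | ∀ i, A.mulVec x i ≤ b D i},
      g x ≤ g xmax)
    (hint : ∀ D, Integrable g (μ D)) :
    ∀ D : 𝒳,
      μ D (⋂ D' : 𝒳, {x : Fin n → ℝ | ∀ i, A.mulVec x i ≤ b D' i}) = 1 ∧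
      (∫ x, g x ∂μ D) ≤ g xmax := by
  intro D
  have hclosed (D' : 𝒳) : IsClosed {x | ∀ i, A.mulVec x i ≤ b D' i} :=
    A.isClosed_setOf_mulVec_le (b D')
  have hfull (D' : 𝒳) : ∀ᵐ x ∂μ D', x ∈ {x | ∀ i, A.mulVec x i ≤ b D' i} := by
    have := hprob D'
    rw [ae_mem_iff_measure_eq (hclosed D').measurableSet.nullMeasurableSet, measure_univ]
    exact hsat D'
  have hsupp : ∀ᵐ x ∂μ D, x ∈ ⋂ D', {x | ∀ i, A.mulVec x i ≤ b D' i} :=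
    Measure.ae_mem_iInter_of_absolutelyContinuous
      (fun D' ↦ IsPureDP.absolutelyContinuous hDP (hconn D D')) hclosed hfull
  have := hprob D
  refine ⟨?_, ?_⟩
  · rwa [ae_mem_iff_measure_eq (isClosed_iInter hclosed).measurableSet.nullMeasurableSet,
      measure_univ] at hsupp
  · calc ∫ x, g x ∂μ D ≤ ∫ _, g xmax ∂μ D :=
          integral_mono_ae (hint D) (integrable_const _) (hsupp.mono hxmax_max)
      _ = g xmax := by simp

/-- If `S* = ⋂_D {x : Ax ≤ b(D)}` is nonempty and the database space is
connected under the neighboring relation, then any `(ε, 0)`-DP mechanism satisfying the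
constraints with probability 1 has, for every database, output supported in `S*`;
consequently its expected objective value is at most `max_{x ∈ S*} g(x)`. -/
theorem pure_dp_supported_in_intersection
    {𝒳 : Type*} {m n : ℕ} (Neighbor : 𝒳 → 𝒳 → Prop)
    (A : Matrix (Fin m) (Fin n) ℝ) (b : 𝒳 → Fin m → ℝ) (ε : ℝ)
    (hS : (⋂ D : 𝒳, {x : Fin n → ℝ | ∀ i, A.mulVec x i ≤ b D i}).Nonempty)
    (hconn : ∀ D D' : 𝒳, Relation.ReflTransGen Neighbor D D')
    (μ : 𝒳 → Measure (Fin n → ℝ)) (hprob : ∀ D, IsProbabilityMeasure (μ D))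
    (hDP : ∀ D D', Neighbor D D' → ∀ V : Set (Fin n → ℝ), MeasurableSet V →
      μ D V ≤ ENNReal.ofReal (Real.exp ε) * μ D' V)
    (hsat : ∀ D, μ D {x | ∀ i, A.mulVec x i ≤ b D i} = 1)
    (g : (Fin n → ℝ) → ℝ) (hg : Continuous g)
    (xmax : Fin n → ℝ)
    (hxmax : xmax ∈ ⋂ D : 𝒳, {x : Fin n → ℝ | ∀ i, A.mulVec x i ≤ b D i})
    (hxmax_max : ∀ x ∈ ⋂ D : 𝒳, {x : Fin n → ℝ | ∀ i, A.mulVec x i ≤ b D i},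
      g x ≤ g xmax)
    (hint : ∀ D, Integrable g (μ D)) :
    ∀ D : 𝒳,
      μ D (⋂ D' : 𝒳, {x : Fin n → ℝ | ∀ i, A.mulVec x i ≤ b D' i}) = 1 ∧
      (∫ x, g x ∂μ D) ≤ g xmax :=
  pure_dp_supported_in_intersection_general Neighbor A b ε hconn μ hprob hDP hsat g xmax hxmax_max
    hint
end
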